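/- arXiv:2511.13260 — 3 statements merged into one kernel-verified Lean document; each statement's English description precedes it below -/
import Mathlib

section
/- Let a > 0, b > 0, 0 < γ < 1 < α, and let V : [0,∞) → [0,∞) be continuous on [0,∞), differentiable at every t > 0 with V(t) > 0, and satisfy V'(t) ≤ -a·V(t)^γ - b·V(t)^α at every such t. Then V(t) = 0 for all t ≥ 1/(a(1-γ)) + 1/(b(α-1)); in particular the settling time is bounded by 1/(a(1-γ)) + 1/(b(α-1)) uniformly over all initial values V(0) ≥ 0. -/
/-- Fixed-time (Polyakov-type) settling estimate: a nonnegative `V` with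
`V' ≤ -a·V^γ - b·V^α`, `0 < γ < 1 < α`, vanishes for all
`t ≥ 1/(a(1-γ)) + 1/(b(α-1))`, uniformly over all initial values. -/
theorem mixed_power_fixed_time (a b γ α : ℝ)
    (ha : 0 < a) (hb : 0 < b) (hγ0 : 0 < γ) (hγ1 : γ < 1) (hα : 1 < α)
    (V : ℝ → ℝ)
    (hVnn : ∀ t ≥ (0:ℝ), 0 ≤ V t)
    (hcont : ContinuousOn V (Set.Ici 0))
    (hdiff : ∀ t > (0:ℝ), V t > 0 → DifferentiableAt ℝ V t)
    (hderiv : ∀ t > (0:ℝ), V t > 0 → deriv V t ≤ -a * V t ^ γ - b * V t ^ α) :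
    ∀ t, t ≥ 1 / (a * (1 - γ)) + 1 / (b * (α - 1)) → V t = 0 := by
  intro t ht
  set T₁ : ℝ := 1 / (a * (1 - γ)) with hT₁def
  set T₂ : ℝ := 1 / (b * (α - 1)) with hT₂def
  have h1γ : (0:ℝ) < 1 - γ := by linarith
  have hα1 : (0:ℝ) < α - 1 := by linarith
  have hT₁ : 0 < T₁ := by rw [hT₁def]; positivity
  have hT₂ : 0 < T₂ := by rw [hT₂def]; positivity
  have hT₂t : T₂ < t := by linarith
  have ht0 : 0 < t := by linarith
  by_contra hne
  have hVt : 0 < V t := lt_of_le_of_ne (hVnn t ht0.le) (Ne.symm hne)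
  -- Step A: V is positive on (0, t]
  have hpos : ∀ s ∈ Set.Ioc (0:ℝ) t, 0 < V s := by
    by_contra hc
    push_neg at hc
    obtain ⟨s, hs, hVs⟩ := hc
    have hVs0 : V s = 0 := le_antisymm hVs (hVnn s hs.1.le)
    set Z : Set ℝ := Set.Icc s t ∩ V ⁻¹' {0} with hZdef
    have hZne : s ∈ Z := ⟨⟨le_refl s, hs.2⟩, hVs0⟩
    have hZbdd : BddAbove Z := ⟨t, fun x hx => hx.1.2⟩
    have hZclosed : IsClosed Z :=
      (hcont.mono (fun x hx => le_trans hs.1.le hx.1)).preimage_isClosed_of_isClosed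
        isClosed_Icc isClosed_singleton
    set r := sSup Z with hrdef
    have hrZ : r ∈ Z := hZclosed.csSup_mem ⟨s, hZne⟩ hZbdd
    have hVr : V r = 0 := hrZ.2
    have hr0 : 0 < r := lt_of_lt_of_le hs.1 hrZ.1.1
    have hrt : r < t := by
      rcases lt_or_eq_of_le hrZ.1.2 with h | h
      · exact h
      · exfalso; rw [h] at hVr; exact hVt.ne' hVr
    have hVpos : ∀ x ∈ Set.Ioc r t, 0 < V x := by
      intro x hx
      rcases (hVnn x (lt_trans hr0 hx.1).le).lt_or_eq with h | h
      · exact h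
      · exfalso
        have hxZ : x ∈ Z := ⟨⟨le_trans hrZ.1.1 hx.1.le, hx.2⟩, h.symm⟩
        exact absurd (le_csSup hZbdd hxZ) (not_le.mpr hx.1)
    have key : ∀ r' ∈ Set.Ioo r t, V t ≤ V r' := by
      intro r' hr'
      have hr'0 : 0 < r' := lt_trans hr0 hr'.1
      have hanti : StrictAntiOn V (Set.Icc r' t) := by
        apply strictAntiOn_of_deriv_neg (convex_Icc _ _)
        · exact hcont.mono (fun x hx => le_trans hr'0.le hx.1)
        · intro x hx
          rw [interior_Icc] at hx
          have hx0 : 0 < x := lt_trans hr'0 hx.1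
          have hVx : 0 < V x := hVpos x ⟨lt_trans hr'.1 hx.1, hx.2.le⟩
          have hd := hderiv x hx0 hVx
          have h1 : 0 < a * V x ^ γ := by positivity
          have h2 : 0 < b * V x ^ α := by positivity
          linarith
      exact (hanti ⟨le_rfl, hr'.2.le⟩ ⟨hr'.2.le, le_rfl⟩ hr'.2).le
    have hcw : Filter.Tendsto V (nhdsWithin r (Set.Ioo r t)) (nhds (V r)) := by
      have := (hcont r hr0.le).mono (s := Set.Ioo r t)
        (fun x hx => le_of_lt (lt_trans hr0 hx.1))
      exact this.tendsto
    have hNB : (nhdsWithin r (Set.Ioo r t)).NeBot := by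
      rw [nhdsWithin_Ioo_eq_nhdsGT hrt]
      infer_instance
    have hVtr : V t ≤ V r :=
      ge_of_tendsto hcw (Filter.eventually_of_mem self_mem_nhdsWithin key)
    rw [hVr] at hVtr
    exact absurd hVtr (not_le.mpr hVt)
  -- Step B: V T₂ ≤ 1
  have hbT : b * (α - 1) * T₂ = 1 := by
    rw [hT₂def]; field_simp
  have hB : V T₂ ≤ 1 := by
    have hVT₂pos : 0 < V T₂ := hpos T₂ ⟨hT₂, hT₂t.le⟩
    by_contra hc
    push_neg at hc
    have hX : (1:ℝ) ≤ V T₂ ^ (1 - α) := by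
      have key : ∀ ε ∈ Set.Ioo (0:ℝ) T₂, 1 - b * (α - 1) * ε ≤ V T₂ ^ (1 - α) := by
        intro ε hε
        have hmono : MonotoneOn (fun x => V x ^ (1 - α) - b * (α - 1) * x)
            (Set.Icc ε T₂) := by
          have hsub : Set.Icc ε T₂ ⊆ Set.Ioc 0 t :=
            fun x hx => ⟨lt_of_lt_of_le hε.1 hx.1, le_trans hx.2 hT₂t.le⟩
          apply monotoneOn_of_deriv_nonneg (convex_Icc _ _)
          · apply ContinuousOn.sub
            · exact (hcont.mono (fun x hx => (hsub hx).1.le)).rpow_const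
                (fun x hx => Or.inl (hpos x (hsub hx)).ne')
            · exact (continuous_const.mul continuous_id).continuousOn
          · intro x hx
            rw [interior_Icc] at hx
            have hx' := hsub (Set.Ioo_subset_Icc_self hx)
            have hVx : 0 < V x := hpos x hx'
            exact (((hdiff x hx'.1 hVx).hasDerivAt.rpow_const (Or.inl hVx.ne')).sub
              ((hasDerivAt_id x).const_mul (b * (α - 1)))).differentiableAt.differentiableWithinAt
          · intro x hx
            rw [interior_Icc] at hx
            have hx' := hsub (Set.Ioo_subset_Icc_self hx)
            have hVx : 0 < V x := hpos x hx'
            have hD : HasDerivAt (fun y => V y ^ (1 - α) - b * (α - 1) * y)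
                (deriv V x * (1 - α) * V x ^ ((1 - α) - 1) - b * (α - 1) * 1) x :=
              ((hdiff x hx'.1 hVx).hasDerivAt.rpow_const (Or.inl hVx.ne')).sub
                ((hasDerivAt_id x).const_mul (b * (α - 1)))
            rw [hD.deriv]
            have hd := hderiv x hx'.1 hVx
            have hexp : (1 - α) - 1 = -α := by ring
            rw [hexp]
            have h2 : (0:ℝ) < V x ^ (-α) := Real.rpow_pos_of_pos hVx _
            have h3 : V x ^ α * V x ^ (-α) = 1 := by
              rw [← Real.rpow_add hVx]; simp
            have h4 : (0:ℝ) ≤ V x ^ γ := Real.rpow_nonneg hVx.le _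
            have h5 : deriv V x * V x ^ (-α) ≤
                (-a * V x ^ γ - b * V x ^ α) * V x ^ (-α) :=
              mul_le_mul_of_nonneg_right hd h2.le
            have h6 : (-a * V x ^ γ - b * V x ^ α) * V x ^ (-α) =
                -a * (V x ^ γ * V x ^ (-α)) - b * (V x ^ α * V x ^ (-α)) := by ring
            rw [h6, h3, mul_one] at h5
            nlinarith [mul_nonneg (mul_nonneg ha.le h4) h2.le,
              mul_le_mul_of_nonneg_left h5 hα1.le]
        have hle := hmono ⟨le_rfl, hε.2.le⟩ ⟨hε.2.le, le_rfl⟩ hε.2.le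
        simp only at hle
        have hVε : 0 < V ε ^ (1 - α) :=
          Real.rpow_pos_of_pos (hpos ε ⟨hε.1, hε.2.le.trans hT₂t.le⟩) _
        linarith
      by_contra hlt
      push_neg at hlt
      set X := V T₂ ^ (1 - α) with hXdef
      set ε := min ((1 - X) / (2 * (b * (α - 1)))) (T₂ / 2) with hεdef
      have hε1 : 0 < ε := by
        apply lt_min
        · apply div_pos (by linarith) (by positivity)
        · linarith
      have hε2 : ε < T₂ := lt_of_le_of_lt (min_le_right _ _) (by linarith)
      have hkey := key ε ⟨hε1, hε2⟩
      have hεle : ε ≤ (1 - X) / (2 * (b * (α - 1))) := min_le_left _ _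
      have hba : 0 < b * (α - 1) := by positivity
      have hhalf : b * (α - 1) * ε ≤ (1 - X) / 2 := by
        calc b * (α - 1) * ε ≤ b * (α - 1) * ((1 - X) / (2 * (b * (α - 1)))) :=
              mul_le_mul_of_nonneg_left hεle hba.le
          _ = (1 - X) / 2 := by
              field_simp
      linarith
    have hlt1 : V T₂ ^ (1 - α) < 1 :=
      Real.rpow_lt_one_of_one_lt_of_neg hc (by linarith)
    linarith
  -- Step C: contradiction on [T₂, t]
  have haT : a * (1 - γ) * T₁ = 1 := by
    rw [hT₁def]; field_simp
  have hanti : AntitoneOn (fun x => V x ^ (1 - γ) + a * (1 - γ) * x)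
      (Set.Icc T₂ t) := by
    have hsub : Set.Icc T₂ t ⊆ Set.Ioc 0 t := fun x hx => ⟨lt_of_lt_of_le hT₂ hx.1, hx.2⟩
    apply antitoneOn_of_deriv_nonpos (convex_Icc _ _)
    · apply ContinuousOn.add
      · exact (hcont.mono (fun x hx => (hsub hx).1.le)).rpow_const
          (fun x hx => Or.inl (hpos x (hsub hx)).ne')
      · exact (continuous_const.mul continuous_id).continuousOn
    · intro x hx
      rw [interior_Icc] at hx
      have hx' := hsub (Set.Ioo_subset_Icc_self hx)
      have hVx : 0 < V x := hpos x hx'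
      exact (((hdiff x hx'.1 hVx).hasDerivAt.rpow_const (Or.inl hVx.ne')).add
        ((hasDerivAt_id x).const_mul (a * (1 - γ)))).differentiableAt.differentiableWithinAt
    · intro x hx
      rw [interior_Icc] at hx
      have hx' := hsub (Set.Ioo_subset_Icc_self hx)
      have hVx : 0 < V x := hpos x hx'
      have hD : HasDerivAt (fun y => V y ^ (1 - γ) + a * (1 - γ) * y)
          (deriv V x * (1 - γ) * V x ^ ((1 - γ) - 1) + a * (1 - γ) * 1) x :=
        ((hdiff x hx'.1 hVx).hasDerivAt.rpow_const (Or.inl hVx.ne')).add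
          ((hasDerivAt_id x).const_mul (a * (1 - γ)))
      rw [hD.deriv]
      have hd := hderiv x hx'.1 hVx
      have hexp : (1 - γ) - 1 = -γ := by ring
      rw [hexp]
      have h2 : (0:ℝ) < V x ^ (-γ) := Real.rpow_pos_of_pos hVx _
      have h3 : V x ^ γ * V x ^ (-γ) = 1 := by
        rw [← Real.rpow_add hVx]; simp
      have h4 : (0:ℝ) ≤ V x ^ α := Real.rpow_nonneg hVx.le _
      have h5 : deriv V x * V x ^ (-γ) ≤
          (-a * V x ^ γ - b * V x ^ α) * V x ^ (-γ) :=
        mul_le_mul_of_nonneg_right hd h2.le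
      have h6 : (-a * V x ^ γ - b * V x ^ α) * V x ^ (-γ) =
          -a * (V x ^ γ * V x ^ (-γ)) - b * (V x ^ α * V x ^ (-γ)) := by ring
      rw [h3, mul_one] at h6
      rw [h6] at h5
      nlinarith [mul_nonneg (mul_nonneg hb.le h4) h2.le,
        mul_le_mul_of_nonneg_left h5 h1γ.le]
  have hle := hanti ⟨le_rfl, hT₂t.le⟩ ⟨hT₂t.le, le_rfl⟩ hT₂t.le
  simp only at hle
  have h1 : V T₂ ^ (1 - γ) ≤ 1 := Real.rpow_le_one (hVnn T₂ hT₂.le) hB h1γ.le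
  have h2 : 0 < V t ^ (1 - γ) := Real.rpow_pos_of_pos hVt _
  have h3 : a * (1 - γ) * T₁ ≤ a * (1 - γ) * (t - T₂) := by
    apply mul_le_mul_of_nonneg_left _ (by positivity : (0:ℝ) ≤ a * (1 - γ))
    linarith
  linarith
end

section
/- Let k₀ > d̄ ≥ 0, ε > 0, a > 0, b > 0, 0 < γ < 1 < α, and let V : [0,∞) → [0,∞) be continuous on [0,∞) and differentiable at every t > 0 with V(t) > 0, satisfying: V'(t) ≤ -(k₀ - d̄) whenever V(t) > ε, and V'(t) ≤ -a·V(t)^γ - b·V(t)^α whenever 0 < V(t) ≤ ε. Then V(t) = 0 for all t ≥ T_out + T_in, where T_out = max(0, V(0) - ε)/(k₀ - d̄) and T_in = 1/(a(1-γ)) + 1/(b(α-1)). In particular the total settling time satisfies T_tot ≤ T_out + T_in. -/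
set_option maxHeartbeats 2000000 in
/-- Lyapunov-level content of Theorem 1 (hybrid-gain control of the perturbed first-order
integrator): constant decay `V' ≤ -(k₀ - d̄)` outside the boundary layer `{V ≤ ε}` and
mixed-power decay `V' ≤ -a·V^γ - b·V^α` inside it force `V` to vanish after
`T_out + T_in` with `T_out = max 0 (V 0 - ε)/(k₀ - d̄)` and
`T_in = 1/(a(1-γ)) + 1/(b(α-1))`. -/
theorem hybrid_gain_total_settling (k₀ dbar ε a b γ α : ℝ)
    (hdbar : 0 ≤ dbar) (hk₀ : k₀ > dbar) (hε : 0 < ε)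
    (ha : 0 < a) (hb : 0 < b) (hγ0 : 0 < γ) (hγ1 : γ < 1) (hα : 1 < α)
    (V : ℝ → ℝ)
    (hVnn : ∀ t ≥ (0:ℝ), 0 ≤ V t)
    (hcont : ContinuousOn V (Set.Ici 0))
    (hdiff : ∀ t > (0:ℝ), V t > 0 → DifferentiableAt ℝ V t)
    (houter : ∀ t > (0:ℝ), V t > ε → deriv V t ≤ -(k₀ - dbar))
    (hinner : ∀ t > (0:ℝ), 0 < V t → V t ≤ ε →
      deriv V t ≤ -a * V t ^ γ - b * V t ^ α) :
    ∀ t, t ≥ max 0 (V 0 - ε) / (k₀ - dbar) + (1 / (a * (1 - γ)) + 1 / (b * (α - 1))) →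
      V t = 0 := by
  have hc : (0:ℝ) < k₀ - dbar := sub_pos.2 hk₀
  set c := k₀ - dbar with hcdef
  set Tout := max 0 (V 0 - ε) / c with hToutdef
  set Ta := 1 / (a * (1 - γ)) with hTadef
  set Tb := 1 / (b * (α - 1)) with hTbdef
  have hTout0 : 0 ≤ Tout := div_nonneg (le_max_left _ _) hc.le
  have haγ : 0 < a * (1 - γ) := mul_pos ha (by linarith)
  have hbα : 0 < b * (α - 1) := mul_pos hb (by linarith)
  have hTa : 0 < Ta := by positivity
  have hTb : 0 < Tb := by positivity
  -- derivative is negative wherever V is positive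
  have derivNeg : ∀ u : ℝ, 0 < u → 0 < V u → deriv V u < 0 := by
    intro u hu hVu
    by_cases h : V u ≤ ε
    · have h1 := hinner u hu hVu h
      have h2 : (0:ℝ) < V u ^ γ := Real.rpow_pos_of_pos hVu γ
      have h3 : (0:ℝ) < V u ^ α := Real.rpow_pos_of_pos hVu α
      nlinarith
    · exact lt_of_le_of_lt (houter u hu (not_le.1 h)) (by linarith)
  -- strict decrease over intervals of positivity
  have key : ∀ s t : ℝ, 0 ≤ s → s < t → (∀ u ∈ Set.Ioo s t, 0 < V u) → V t < V s := by
    intro s t hs hst hpos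
    have hsub : Set.Icc s t ⊆ Set.Ici 0 := fun u hu => le_trans hs hu.1
    have hsa : StrictAntiOn V (Set.Icc s t) := by
      apply strictAntiOn_of_deriv_neg (convex_Icc s t) (hcont.mono hsub)
      rw [interior_Icc]
      intro u hu
      exact derivNeg u (lt_of_le_of_lt hs hu.1) (hpos u hu)
    exact hsa (Set.left_mem_Icc.2 hst.le) (Set.right_mem_Icc.2 hst.le) hst
  -- a point in the compactly-realized sup trick: sublevel/zero sets are forward invariant
  have inv : ∀ τ, 0 ≤ τ → V τ ≤ ε → ∀ t, τ ≤ t → V t ≤ ε := by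
    intro τ hτ hVτ t ht
    rcases eq_or_lt_of_le ht with rfl | hlt
    · exact hVτ
    by_contra hne
    have hVt : ε < V t := not_le.1 hne
    set S := Set.Icc τ t ∩ V ⁻¹' Set.Iic ε with hSdef
    have hsub : Set.Icc τ t ⊆ Set.Ici 0 := fun u hu => le_trans hτ hu.1
    have hScl : IsClosed S :=
      (hcont.mono hsub).preimage_isClosed_of_isClosed isClosed_Icc isClosed_Iic
    have hScomp : IsCompact S := isCompact_Icc.of_isClosed_subset hScl Set.inter_subset_left
    have hSne : S.Nonempty := ⟨τ, ⟨le_refl τ, hlt.le⟩, hVτ⟩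
    have hsmem : sSup S ∈ S := hScomp.sSup_mem hSne
    have hst : sSup S < t := lt_of_le_of_ne hsmem.1.2
      (by intro hEq; rw [hEq] at hsmem; exact absurd hsmem.2 (not_le.2 hVt))
    have hpos : ∀ u ∈ Set.Ioo (sSup S) t, 0 < V u := by
      intro u hu
      by_contra hle
      have : V u ≤ ε := le_trans (le_of_not_gt hle) hε.le
      have : u ≤ sSup S := le_csSup hScomp.bddAbove ⟨⟨le_trans hsmem.1.1 hu.1.le, hu.2.le⟩, this⟩
      exact absurd hu.1 (not_lt.2 this)
    have := key (sSup S) t (le_trans hτ hsmem.1.1) hst hpos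
    have : V t < ε := lt_of_lt_of_le this hsmem.2
    linarith
  have stick : ∀ τ, 0 ≤ τ → V τ = 0 → ∀ t, τ ≤ t → V t = 0 := by
    intro τ hτ hVτ t ht
    rcases eq_or_lt_of_le ht with rfl | hlt
    · exact hVτ
    by_contra hne
    have hVt : 0 < V t := lt_of_le_of_ne (hVnn t (le_trans hτ ht)) (Ne.symm hne)
    set S := Set.Icc τ t ∩ V ⁻¹' Set.Iic 0 with hSdef
    have hsub : Set.Icc τ t ⊆ Set.Ici 0 := fun u hu => le_trans hτ hu.1
    have hScl : IsClosed S :=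
      (hcont.mono hsub).preimage_isClosed_of_isClosed isClosed_Icc isClosed_Iic
    have hScomp : IsCompact S := isCompact_Icc.of_isClosed_subset hScl Set.inter_subset_left
    have hSne : S.Nonempty := ⟨τ, ⟨le_refl τ, hlt.le⟩, hVτ.le⟩
    have hsmem : sSup S ∈ S := hScomp.sSup_mem hSne
    have hst : sSup S < t := lt_of_le_of_ne hsmem.1.2
      (by intro hEq; rw [hEq] at hsmem; exact absurd hsmem.2 (not_le.2 hVt))
    have hpos : ∀ u ∈ Set.Ioo (sSup S) t, 0 < V u := by
      intro u hu
      by_contra hle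
      have : u ≤ sSup S := le_csSup hScomp.bddAbove
        ⟨⟨le_trans hsmem.1.1 hu.1.le, hu.2.le⟩, le_of_not_gt hle⟩
      exact absurd hu.1 (not_lt.2 this)
    have hlt2 := key (sSup S) t (le_trans hτ hsmem.1.1) hst hpos
    have hVs : V (sSup S) ≤ 0 := hsmem.2
    have := hVnn t (le_trans hτ ht)
    linarith
  -- main claim: V vanishes somewhere in [0, T]
  set T := Tout + (Ta + Tb) with hTdef
  have main : ∃ τ ∈ Set.Icc (0:ℝ) T, V τ = 0 := by
    by_contra h
    push_neg at h
    have hpos : ∀ u ∈ Set.Icc (0:ℝ) T, 0 < V u := fun u hu =>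
      lt_of_le_of_ne (hVnn u hu.1) (Ne.symm (h u hu))
    -- Step 1: V Tout ≤ ε
    have step1 : V Tout ≤ ε := by
      by_contra hcontra
      have hT : ε < V Tout := not_le.1 hcontra
      have hvε : ∀ u ∈ Set.Icc (0:ℝ) Tout, ε < V u := by
        intro u hu
        by_contra hle
        exact absurd (inv u hu.1 (not_lt.1 hle) Tout hu.2) (not_le.2 hT)
      have hV0 : ε < V 0 := hvε 0 ⟨le_refl 0, hTout0⟩
      have hToutval : c * Tout = V 0 - ε := by
        rw [hToutdef, max_eq_right (by linarith)]
        field_simp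
      have hToutpos : 0 < Tout := by
        rw [hToutdef, max_eq_right (by linarith)]
        exact div_pos (by linarith) hc
      have hanti : AntitoneOn (fun u => V u + c * u) (Set.Icc (0:ℝ) Tout) := by
        apply antitoneOn_of_deriv_nonpos (convex_Icc _ _)
        · exact (hcont.mono (fun u hu => hu.1)).add (continuous_const.mul continuous_id).continuousOn
        · rw [interior_Icc]
          intro u hu
          have hu0 : 0 < u := hu.1
          have hVu : 0 < V u := lt_trans hε (hvε u ⟨hu.1.le, hu.2.le⟩)
          exact ((hdiff u hu0 hVu).add ((differentiable_id.const_mul c) u)).differentiableWithinAt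
        · rw [interior_Icc]
          intro u hu
          have hu0 : 0 < u := hu.1
          have hVε : ε < V u := hvε u ⟨hu.1.le, hu.2.le⟩
          have hVu : 0 < V u := lt_trans hε hVε
          have hd : HasDerivAt (fun u => V u + c * u) (deriv V u + c) u := by
            have h1 := (hdiff u hu0 hVu).hasDerivAt
            have h2 := (hasDerivAt_id u).const_mul c
            exact (h1.add h2).congr_deriv (by simp)
          rw [hd.deriv]
          have := houter u hu0 hVε
          linarith
      have := hanti (Set.left_mem_Icc.2 hTout0) (Set.right_mem_Icc.2 hTout0) hTout0
      simp only [mul_zero, add_zero] at this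
      -- this : V Tout + c * Tout ≤ V 0
      rw [hToutval] at this
      linarith
    have hle : ∀ u, Tout ≤ u → V u ≤ ε := inv Tout hTout0 step1
    -- Step 2: V (Tout + Tb) ≤ 1
    set t₂ := Tout + Tb with ht₂def
    have ht₂T : t₂ ≤ T := by rw [ht₂def, hTdef]; linarith
    have ht₂0 : 0 ≤ t₂ := by linarith
    have hWcont : ContinuousOn (fun u => V u ^ (1 - α)) (Set.Icc Tout t₂) := by
      apply ContinuousOn.rpow_const
      · exact hcont.mono (fun u hu => le_trans hTout0 hu.1)
      · intro u hu
        exact Or.inl (hpos u ⟨le_trans hTout0 hu.1, le_trans hu.2 ht₂T⟩).ne'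
    have hinterior : ∀ u ∈ Set.Ioo Tout t₂, 0 < u ∧ 0 < V u ∧ V u ≤ ε := by
      intro u hu
      refine ⟨lt_of_le_of_lt hTout0 hu.1, hpos u ⟨le_trans hTout0 hu.1.le, le_trans hu.2.le ht₂T⟩,
        hle u hu.1.le⟩
    have step2 : V t₂ ≤ 1 := by
      have hanti : AntitoneOn (fun u => b * (α - 1) * u - V u ^ (1 - α)) (Set.Icc Tout t₂) := by
        apply antitoneOn_of_deriv_nonpos (convex_Icc _ _)
        · exact (continuous_const.mul continuous_id).continuousOn.sub hWcont
        · rw [interior_Icc]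
          intro u hu
          obtain ⟨hu0, hVu, hVε⟩ := hinterior u hu
          have hd1 := (hdiff u hu0 hVu).hasDerivAt
          have hd2 := hd1.rpow_const (p := 1 - α) (Or.inl hVu.ne')
          exact (((hasDerivAt_id u).const_mul (b * (α-1))).sub hd2).differentiableAt.differentiableWithinAt
        · rw [interior_Icc]
          intro u hu
          obtain ⟨hu0, hVu, hVε⟩ := hinterior u hu
          have hd1 := (hdiff u hu0 hVu).hasDerivAt
          have hd2 := hd1.rpow_const (p := 1 - α) (Or.inl hVu.ne')
          have hd : HasDerivAt (fun u => b * (α - 1) * u - V u ^ (1 - α))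
              (b * (α - 1) - deriv V u * (1 - α) * V u ^ (1 - α - 1)) u := by
            have h2 := ((hasDerivAt_id u).const_mul (b * (α-1))).sub hd2
            exact h2.congr_deriv (by simp)
          rw [hd.deriv]
          have hexp : (1 : ℝ) - α - 1 = -α := by ring
          rw [hexp]
          have hDnn := hinner u hu0 hVu hVε
          have hPQ : V u ^ α * V u ^ (-α) = 1 := by
            rw [← Real.rpow_add hVu]; simp
          have hQ : 0 < V u ^ (-α) := Real.rpow_pos_of_pos hVu _
          have hG : 0 < V u ^ γ := Real.rpow_pos_of_pos hVu γ
          have hDQ : deriv V u * V u ^ (-α) ≤ -b := by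
            nlinarith [mul_le_mul_of_nonneg_right hDnn hQ.le, mul_pos hG hQ]
          nlinarith [mul_le_mul_of_nonneg_left hDQ (by linarith : (0:ℝ) ≤ α - 1)]
      have h2 := hanti (Set.left_mem_Icc.2 (by linarith)) (Set.right_mem_Icc.2 (by linarith))
        (by linarith : Tout ≤ t₂)
      -- h2 : b(α-1) t₂ - W t₂ ≤ b(α-1) Tout - W Tout
      have hb1 : b * (α - 1) * Tb = 1 := by
        rw [hTbdef]; field_simp; exact div_self (sub_pos.2 hα).ne'
      have hWTout : 0 < V Tout ^ (1 - α) :=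
        Real.rpow_pos_of_pos (hpos Tout ⟨hTout0, by rw [hTdef]; linarith⟩) _
      have hWt₂ : 1 < V t₂ ^ (1 - α) := by
        simp only [ht₂def] at h2 ⊢
        nlinarith
      by_contra hgt
      have h1V : 1 ≤ V t₂ := not_le.1 hgt |>.le
      have := Real.rpow_le_one_of_one_le_of_nonpos h1V (by linarith : (1:ℝ) - α ≤ 0)
      linarith
    -- Step 3: contradiction at t₃ = t₂ + Ta
    set t₃ := t₂ + Ta with ht₃def
    have ht₃T : t₃ = T := by rw [ht₃def, ht₂def, hTdef]; ring
    have hZcont : ContinuousOn (fun u => V u ^ (1 - γ)) (Set.Icc t₂ t₃) := by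
      apply ContinuousOn.rpow_const
      · exact hcont.mono (fun u hu => le_trans ht₂0 hu.1)
      · intro u hu
        exact Or.inl (hpos u ⟨le_trans ht₂0 hu.1, hu.2.trans_eq ht₃T⟩).ne'
    have hanti : AntitoneOn (fun u => V u ^ (1 - γ) + a * (1 - γ) * u) (Set.Icc t₂ t₃) := by
      apply antitoneOn_of_deriv_nonpos (convex_Icc _ _)
      · exact hZcont.add (continuous_const.mul continuous_id).continuousOn
      · rw [interior_Icc]
        intro u hu
        have hu0 : 0 < u := lt_of_le_of_lt ht₂0 hu.1
        have hVu : 0 < V u := hpos u ⟨le_trans ht₂0 hu.1.le, hu.2.le.trans_eq ht₃T⟩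
        have hd1 := (hdiff u hu0 hVu).hasDerivAt
        have hd2 := hd1.rpow_const (p := 1 - γ) (Or.inl hVu.ne')
        exact (hd2.add ((hasDerivAt_id u).const_mul (a * (1-γ)))).differentiableAt.differentiableWithinAt
      · rw [interior_Icc]
        intro u hu
        have hu0 : 0 < u := lt_of_le_of_lt ht₂0 hu.1
        have hVu : 0 < V u := hpos u ⟨le_trans ht₂0 hu.1.le, hu.2.le.trans_eq ht₃T⟩
        have hVε : V u ≤ ε := hle u (by rw [ht₂def] at hu; linarith [hu.1])
        have hd1 := (hdiff u hu0 hVu).hasDerivAt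
        have hd2 := hd1.rpow_const (p := 1 - γ) (Or.inl hVu.ne')
        have hd : HasDerivAt (fun u => V u ^ (1 - γ) + a * (1 - γ) * u)
            (deriv V u * (1 - γ) * V u ^ (1 - γ - 1) + a * (1 - γ)) u := by
          have h2 := hd2.add ((hasDerivAt_id u).const_mul (a * (1-γ)))
          exact h2.congr_deriv (by simp)
        rw [hd.deriv]
        have hexp : (1 : ℝ) - γ - 1 = -γ := by ring
        rw [hexp]
        have hDnn := hinner u hu0 hVu hVε
        have hPQ : V u ^ γ * V u ^ (-γ) = 1 := by
          rw [← Real.rpow_add hVu]; simp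
        have hQ : 0 < V u ^ (-γ) := Real.rpow_pos_of_pos hVu _
        have hP : 0 < V u ^ α := Real.rpow_pos_of_pos hVu α
        have hDQ : deriv V u * V u ^ (-γ) ≤ -a := by
          nlinarith [mul_le_mul_of_nonneg_right hDnn hQ.le, mul_pos hP hQ]
        nlinarith [mul_le_mul_of_nonneg_left hDQ (by linarith : (0:ℝ) ≤ 1 - γ)]
    have h3 := hanti (Set.left_mem_Icc.2 (by linarith)) (Set.right_mem_Icc.2 (by linarith))
      (by linarith : t₂ ≤ t₃)
    have ha1 : a * (1 - γ) * Ta = 1 := by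
      rw [hTadef]; field_simp; exact div_self (sub_pos.2 hγ1).ne'
    have hZt₂ : V t₂ ^ (1 - γ) ≤ 1 :=
      Real.rpow_le_one (hpos t₂ ⟨ht₂0, ht₂T⟩).le step2 (by linarith)
    have hZt₃ : 0 < V t₃ ^ (1 - γ) :=
      Real.rpow_pos_of_pos (hpos t₃ ⟨by linarith, ht₃T.le⟩) _
    simp only [ht₃def] at h3 hZt₃
    nlinarith
  obtain ⟨τ, hτmem, hτ⟩ := main
  intro t ht
  exact stick τ hτmem.1 hτ t (le_trans (hτmem.2.trans_eq (by rw [hTdef])) ht)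
end

section
/- Let k₀ᵢ > d̄ᵢ ≥ 0 for i = 1,…,n, let ε > 0, a_i > 0, b_i > 0, 0 < γ < 1 < α, and let V₁,…,Vₙ : [0,∞) → [0,∞) be continuous on [0,∞) and differentiable at every t > 0 with Vᵢ(t) > 0, satisfying for each i: Vᵢ'(t) ≤ -(k₀ᵢ - d̄ᵢ) whenever Vᵢ(t) > ε, and Vᵢ'(t) ≤ -a_i·Vᵢ(t)^γ - b_i·Vᵢ(t)^α whenever 0 < Vᵢ(t) ≤ ε. Then every Vᵢ(t) = 0 for all t ≥ T_out + T_in, where T_out = max_i max(0, Vᵢ(0) - ε)/(k₀ᵢ - d̄ᵢ) and T_in = max_i (1/(a_i(1-γ)) + 1/(b_i(α-1))). Hence the total settling time satisfies T_tot ≤ T_out + T_in. -/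
set_option maxHeartbeats 1000000

open Set Filter

lemma settle_single (V : ℝ → ℝ) (c ε a b γ α : ℝ)
    (hc : 0 < c) (hε : 0 < ε) (ha : 0 < a) (hb : 0 < b)
    (hγ0 : 0 < γ) (hγ1 : γ < 1) (hα : 1 < α)
    (hVnn : ∀ t ≥ (0:ℝ), 0 ≤ V t)
    (hcont : ContinuousOn V (Set.Ici 0))
    (hdiff : ∀ t > (0:ℝ), V t > 0 → DifferentiableAt ℝ V t)
    (houter : ∀ t > (0:ℝ), V t > ε → deriv V t ≤ -c)
    (hinner : ∀ t > (0:ℝ), 0 < V t → V t ≤ ε →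
      deriv V t ≤ -a * V t ^ γ - b * V t ^ α) :
    ∀ t, max 0 (V 0 - ε) / c + (1 / (a * (1 - γ)) + 1 / (b * (α - 1))) ≤ t → V t = 0 := by
  have h1γ : 0 < 1 - γ := by linarith
  have hα1 : 0 < α - 1 := by linarith
  -- derivative nonpositive wherever V positive
  have dnp : ∀ t > (0:ℝ), 0 < V t → deriv V t ≤ 0 := by
    intro t ht hpos
    rcases le_or_gt (V t) ε with h | h
    · have := hinner t ht hpos h
      have h1 : 0 < V t ^ γ := Real.rpow_pos_of_pos hpos γ
      have h2 : 0 < V t ^ α := Real.rpow_pos_of_pos hpos α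
      nlinarith
    · linarith [houter t ht h]
  -- antitone on an interval where V is positive
  have anti : ∀ t₁ t₂ : ℝ, 0 ≤ t₁ → t₁ ≤ t₂ →
      (∀ s, t₁ ≤ s → s ≤ t₂ → 0 < V s) → V t₂ ≤ V t₁ := by
    intro t₁ t₂ h0 h12 hpos
    have := antitoneOn_of_deriv_nonpos (convex_Icc t₁ t₂)
      (hcont.mono (Icc_subset_Ici_iff h12 |>.mpr h0))
      (fun x hx => by
        rw [interior_Icc] at hx
        exact (hdiff x (lt_of_le_of_lt h0 hx.1) (hpos x hx.1.le hx.2.le)).differentiableWithinAt)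
      (fun x hx => by
        rw [interior_Icc] at hx
        exact dnp x (lt_of_le_of_lt h0 hx.1) (hpos x hx.1.le hx.2.le))
    exact this (left_mem_Icc.mpr h12) (right_mem_Icc.mpr h12) h12
  -- backwards positivity
  have persist : ∀ t₂ ≥ (0:ℝ), 0 < V t₂ → ∀ s, 0 ≤ s → s ≤ t₂ → 0 < V s := by
    intro t₂ ht₂ hVt₂ s hs hst
    by_contra hcon
    have hVs : V s = 0 := le_antisymm (not_lt.mp hcon) (hVnn s hs)
    set K := Icc s t₂ ∩ V ⁻¹' {0} with hK
    have hIccIci : Icc s t₂ ⊆ Ici 0 := Icc_subset_Ici_iff hst |>.mpr hs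
    have hKclosed : IsClosed K :=
      ContinuousOn.preimage_isClosed_of_isClosed (hcont.mono hIccIci) isClosed_Icc
        isClosed_singleton
    have hKcpt : IsCompact K := isCompact_Icc.of_isClosed_subset hKclosed inter_subset_left
    obtain ⟨τ, hτK, hτmax⟩ := hKcpt.exists_isGreatest ⟨s, ⟨left_mem_Icc.mpr hst, hVs⟩⟩
    have hVτ : V τ = 0 := hτK.2
    have hτ0 : 0 ≤ τ := hτK.1.1.trans' hs
    have hτt₂ : τ < t₂ := lt_of_le_of_ne hτK.1.2 (fun h => by rw [h] at hVτ; linarith)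
    have hposIoc : ∀ u, τ < u → u ≤ t₂ → 0 < V u := by
      intro u hu hut
      rcases (hVnn u (hτ0.trans hu.le)).lt_or_eq with h | h
      · exact h
      · exact absurd (hτmax ⟨⟨hτK.1.1.trans hu.le, hut⟩, h.symm⟩) (not_le.mpr hu)
    -- find u near τ with V u < V t₂
    have hcw : ContinuousWithinAt V (Ici 0) τ := hcont τ hτ0
    have ev1 : ∀ᶠ u in nhdsWithin τ (Ioi τ), V u < V t₂ := by
      have : ∀ᶠ u in nhdsWithin τ (Ici 0), V u < V t₂ := by
        have := hcw (Iio_mem_nhds (by rw [hVτ]; exact hVt₂))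
        filter_upwards [this] with u hu using hu
      exact this.filter_mono (nhdsWithin_mono τ (fun u hu => le_of_lt (lt_of_le_of_lt hτ0 hu)))
    have ev2 : ∀ᶠ u in nhdsWithin τ (Ioi τ), u ∈ Ioo τ t₂ :=
      Ioo_mem_nhdsGT_of_mem ⟨le_refl τ, hτt₂⟩
    obtain ⟨u, hu1, hu2⟩ := (ev1.and ev2).exists
    have : V t₂ ≤ V u :=
      anti u t₂ (hτ0.trans hu2.1.le) hu2.2.le
        (fun w hw hw2 => hposIoc w (lt_of_lt_of_le hu2.1 hw) hw2)
    linarith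
  -- global monotonicity
  have mono : ∀ t₁ t₂ : ℝ, 0 ≤ t₁ → t₁ ≤ t₂ → V t₂ ≤ V t₁ := by
    intro t₁ t₂ h0 h12
    rcases (hVnn t₂ (h0.trans h12)).lt_or_eq with h | h
    · exact anti t₁ t₂ h0 h12 (fun s hs hst => persist t₂ (h0.trans h12) h s (h0.trans hs) hst)
    · rw [← h]; exact hVnn t₁ h0
  set T1 := max 0 (V 0 - ε) / c with hT1
  have hT1nn : 0 ≤ T1 := div_nonneg (le_max_left _ _) hc.le
  -- Phase 1 : V T1 ≤ ε
  have phase1 : V T1 ≤ ε := by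
    by_contra hcon
    push_neg at hcon
    have hallbig : ∀ s, 0 ≤ s → s ≤ T1 → ε < V s := fun s hs hsT =>
      lt_of_lt_of_le hcon (mono s T1 hs hsT)
    have hV0 : ε < V 0 := hallbig 0 le_rfl hT1nn
    have hT1eq : T1 = (V 0 - ε) / c := by rw [hT1, max_eq_right (by linarith)]
    have hT1pos : 0 < T1 := by rw [hT1eq]; exact div_pos (by linarith) hc
    -- g = V + c * id antitone on [0, T1]
    have hgc : ContinuousOn (fun s => V s + c * s) (Icc 0 T1) :=
      (hcont.mono ((Icc_subset_Ici_iff hT1nn).mpr le_rfl)).add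
        ((continuous_const.mul continuous_id').continuousOn)
    have hgd : DifferentiableOn ℝ (fun s => V s + c * s) (interior (Icc 0 T1)) := by
      intro x hx
      rw [interior_Icc] at hx
      exact ((hdiff x hx.1 (lt_trans hε (hallbig x hx.1.le hx.2.le))).add
        (differentiableAt_fun_id.const_mul c)).differentiableWithinAt
    have hgd0 : ∀ x ∈ interior (Icc 0 T1), deriv (fun s => V s + c * s) x ≤ 0 := by
      intro x hx
      rw [interior_Icc] at hx
      have hd : HasDerivAt (fun s => V s + c * s) (deriv V x + c) x := by
        have h1 : HasDerivAt V (deriv V x) x :=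
          (hdiff x hx.1 (lt_trans hε (hallbig x hx.1.le hx.2.le))).hasDerivAt
        simpa using h1.fun_add ((hasDerivAt_id x).const_mul c)
      rw [hd.deriv]
      linarith [houter x hx.1 (hallbig x hx.1.le hx.2.le)]
    have key := antitoneOn_of_deriv_nonpos (convex_Icc 0 T1) hgc hgd hgd0
    have hg := key (left_mem_Icc.mpr hT1nn) (right_mem_Icc.mpr hT1nn) hT1nn
    simp only [] at hg
    have hcT1 : c * T1 = V 0 - ε := by rw [hT1eq]; field_simp
    have : V T1 + c * T1 ≤ V 0 + c * 0 := hg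
    linarith
  -- Phase 2a : reach 1 after Tb = 1/(b*(α-1))
  set Tb := 1 / (b * (α - 1)) with hTbdef
  have hTbpos : 0 < Tb := by positivity
  set T2 := T1 + Tb with hT2def
  have hT2nn : 0 ≤ T2 := by rw [hT2def]; linarith
  have phase2a : V T2 ≤ 1 := by
    by_contra hcon
    push_neg at hcon
    have hallbig : ∀ s, T1 ≤ s → s ≤ T2 → 1 < V s := fun s hs hsT =>
      lt_of_lt_of_le hcon (mono s T2 (hT1nn.trans hs) hsT)
    have hallsmall : ∀ s, T1 ≤ s → s ≤ T2 → V s ≤ ε := fun s hs _ =>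
      (mono T1 s hT1nn hs).trans phase1
    have hIcc : Icc T1 T2 ⊆ Ici (0:ℝ) := (Icc_subset_Ici_iff (by linarith)).mpr hT1nn
    have hgc : ContinuousOn (fun s => V s ^ (1 - α) - b * (α - 1) * s) (Icc T1 T2) := by
      apply ContinuousOn.sub
      · exact (hcont.mono hIcc).rpow_const (fun x hx =>
          Or.inl (by have := hallbig x hx.1 hx.2; intro h; rw [h] at this; linarith))
      · exact (continuous_const.mul continuous_id').continuousOn
    have hgd : DifferentiableOn ℝ (fun s => V s ^ (1 - α) - b * (α - 1) * s)
        (interior (Icc T1 T2)) := by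
      intro x hx
      rw [interior_Icc] at hx
      have hVx : 1 < V x := hallbig x hx.1.le hx.2.le
      have hdV : DifferentiableAt ℝ V x :=
        hdiff x (lt_of_le_of_lt hT1nn hx.1) (by linarith)
      exact ((hdV.rpow_const (Or.inl (by linarith))).sub
        (differentiableAt_fun_id.const_mul _)).differentiableWithinAt
    have hgd0 : ∀ x ∈ interior (Icc T1 T2),
        0 ≤ deriv (fun s => V s ^ (1 - α) - b * (α - 1) * s) x := by
      intro x hx
      rw [interior_Icc] at hx
      have hVx : 1 < V x := hallbig x hx.1.le hx.2.le
      have hVxpos : 0 < V x := by linarith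
      have hx0 : 0 < x := lt_of_le_of_lt hT1nn hx.1
      have hdV : HasDerivAt V (deriv V x) x := (hdiff x hx0 hVxpos).hasDerivAt
      have hd : HasDerivAt (fun s => V s ^ (1 - α) - b * (α - 1) * s)
          (deriv V x * (1 - α) * V x ^ (1 - α - 1) - b * (α - 1)) x := by
        simpa only [id_eq, mul_one] using (hdV.rpow_const (Or.inl (ne_of_gt hVxpos))).fun_sub
          ((hasDerivAt_id x).const_mul (b * (α - 1)))
      rw [hd.deriv]
      have hder : deriv V x ≤ -b * V x ^ α := by
        have := hinner x hx0 hVxpos (hallsmall x hx.1.le hx.2.le)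
        have : 0 < a * V x ^ γ := by positivity
        nlinarith [hinner x hx0 hVxpos (hallsmall x hx.1.le hx.2.le)]
      have hpow : 0 < V x ^ (1 - α - 1) := Real.rpow_pos_of_pos hVxpos _
      have hmul : V x ^ α * V x ^ (1 - α - 1) = V x ^ (-(0:ℝ)) * V x ^ (0:ℝ) := by
        rw [← Real.rpow_add hVxpos, ← Real.rpow_add hVxpos]; ring_nf
      have hmul1 : V x ^ α * V x ^ (1 - α - 1) = V x ^ (α + (1 - α - 1)) :=
        (Real.rpow_add hVxpos _ _).symm
      have hmul2 : V x ^ (α + (1 - α - 1)) = V x ^ (0:ℝ) := by ring_nf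
      have hmul3 : V x ^ α * V x ^ (1 - α - 1) = 1 := by
        rw [hmul1, hmul2, Real.rpow_zero]
      have step1 : -b * V x ^ α * (1 - α) ≤ deriv V x * (1 - α) :=
        mul_le_mul_of_nonpos_right hder (by linarith)
      have step2 : -b * V x ^ α * (1 - α) * V x ^ (1 - α - 1)
          ≤ deriv V x * (1 - α) * V x ^ (1 - α - 1) :=
        mul_le_mul_of_nonneg_right step1 hpow.le
      have hkey : -b * V x ^ α * (1 - α) * V x ^ (1 - α - 1) = b * (α - 1) := by
        have hh : -b * V x ^ α * (1 - α) * V x ^ (1 - α - 1)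
            = b * (α - 1) * (V x ^ α * V x ^ (1 - α - 1)) := by ring
        rw [hh, hmul3, mul_one]
      linarith
    have key := monotoneOn_of_deriv_nonneg (convex_Icc T1 T2) hgc hgd hgd0
    have hg : V T1 ^ (1 - α) - b * (α - 1) * T1 ≤ V T2 ^ (1 - α) - b * (α - 1) * T2 :=
      key (left_mem_Icc.mpr (by linarith)) (right_mem_Icc.mpr (by linarith)) (by linarith)
    have hbt : b * (α - 1) * T2 - b * (α - 1) * T1 = 1 := by
      rw [hT2def, hTbdef]; field_simp; ring
    have h1 : 0 < V T1 ^ (1 - α) :=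
      Real.rpow_pos_of_pos (lt_trans one_pos (hallbig T1 le_rfl (by linarith))) _
    have h2 : V T2 ^ (1 - α) < 1 :=
      Real.rpow_lt_one_of_one_lt_of_neg hcon (by linarith)
    linarith
  -- Phase 2b : reach 0 after Ta = 1/(a*(1-γ))
  set Ta := 1 / (a * (1 - γ)) with hTadef
  have hTapos : 0 < Ta := by positivity
  set T3 := T2 + Ta with hT3def
  have hT3nn : 0 ≤ T3 := by rw [hT3def]; linarith
  have phase2b : V T3 = 0 := by
    by_contra hcon
    have hVT3 : 0 < V T3 := (hVnn T3 hT3nn).lt_of_ne (Ne.symm hcon)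
    have hallpos : ∀ s, T2 ≤ s → s ≤ T3 → 0 < V s := fun s hs hsT =>
      persist T3 hT3nn hVT3 s (hT2nn.trans hs) hsT
    have hallsmall : ∀ s, T2 ≤ s → s ≤ T3 → V s ≤ ε := fun s hs _ =>
      (mono T2 s hT2nn hs).trans ((mono T1 T2 hT1nn (by linarith)).trans phase1)
    have hall1 : ∀ s, T2 ≤ s → s ≤ T3 → V s ≤ 1 := fun s hs _ =>
      (mono T2 s hT2nn hs).trans phase2a
    have hIcc : Icc T2 T3 ⊆ Ici (0:ℝ) := (Icc_subset_Ici_iff (by linarith)).mpr hT2nn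
    have hgc : ContinuousOn (fun s => V s ^ (1 - γ) + a * (1 - γ) * s) (Icc T2 T3) := by
      apply ContinuousOn.add
      · exact (hcont.mono hIcc).rpow_const (fun x hx => Or.inr (by linarith))
      · exact (continuous_const.mul continuous_id').continuousOn
    have hgd : DifferentiableOn ℝ (fun s => V s ^ (1 - γ) + a * (1 - γ) * s)
        (interior (Icc T2 T3)) := by
      intro x hx
      rw [interior_Icc] at hx
      have hVx : 0 < V x := hallpos x hx.1.le hx.2.le
      have hdV : DifferentiableAt ℝ V x := hdiff x (lt_of_le_of_lt hT2nn hx.1) hVx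
      exact ((hdV.rpow_const (Or.inl (ne_of_gt hVx))).add
        (differentiableAt_fun_id.const_mul _)).differentiableWithinAt
    have hgd0 : ∀ x ∈ interior (Icc T2 T3),
        deriv (fun s => V s ^ (1 - γ) + a * (1 - γ) * s) x ≤ 0 := by
      intro x hx
      rw [interior_Icc] at hx
      have hVx : 0 < V x := hallpos x hx.1.le hx.2.le
      have hx0 : 0 < x := lt_of_le_of_lt hT2nn hx.1
      have hdV : HasDerivAt V (deriv V x) x := (hdiff x hx0 hVx).hasDerivAt
      have hd : HasDerivAt (fun s => V s ^ (1 - γ) + a * (1 - γ) * s)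
          (deriv V x * (1 - γ) * V x ^ (1 - γ - 1) + a * (1 - γ)) x := by
        simpa only [id_eq, mul_one] using (hdV.rpow_const (Or.inl (ne_of_gt hVx))).fun_add
          ((hasDerivAt_id x).const_mul (a * (1 - γ)))
      rw [hd.deriv]
      have hder : deriv V x ≤ -a * V x ^ γ := by
        have h2 : 0 < b * V x ^ α := by positivity
        nlinarith [hinner x hx0 hVx (hallsmall x hx.1.le hx.2.le)]
      have hpow : 0 < V x ^ (1 - γ - 1) := Real.rpow_pos_of_pos hVx _
      have hmul3 : V x ^ γ * V x ^ (1 - γ - 1) = 1 := by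
        rw [← Real.rpow_add hVx]
        norm_num
      have step1 : deriv V x * (1 - γ) ≤ -a * V x ^ γ * (1 - γ) :=
        mul_le_mul_of_nonneg_right hder (by linarith)
      have step2 : deriv V x * (1 - γ) * V x ^ (1 - γ - 1)
          ≤ -a * V x ^ γ * (1 - γ) * V x ^ (1 - γ - 1) :=
        mul_le_mul_of_nonneg_right step1 hpow.le
      have hkey : -a * V x ^ γ * (1 - γ) * V x ^ (1 - γ - 1) = -(a * (1 - γ)) := by
        have hh : -a * V x ^ γ * (1 - γ) * V x ^ (1 - γ - 1)
            = -(a * (1 - γ)) * (V x ^ γ * V x ^ (1 - γ - 1)) := by ring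
        rw [hh, hmul3, mul_one]
      linarith
    have key := antitoneOn_of_deriv_nonpos (convex_Icc T2 T3) hgc hgd hgd0
    have hg : V T3 ^ (1 - γ) + a * (1 - γ) * T3 ≤ V T2 ^ (1 - γ) + a * (1 - γ) * T2 :=
      key (left_mem_Icc.mpr (by linarith)) (right_mem_Icc.mpr (by linarith)) (by linarith)
    have hat : a * (1 - γ) * T3 - a * (1 - γ) * T2 = 1 := by
      rw [hT3def, hTadef]; field_simp; ring
    have h1 : 0 < V T3 ^ (1 - γ) := Real.rpow_pos_of_pos hVT3 _
    have h2 : V T2 ^ (1 - γ) ≤ 1 :=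
      Real.rpow_le_one (hVnn T2 hT2nn) phase2a (by linarith)
    linarith
  intro t ht
  have hT3t : T3 ≤ t := by rw [hT3def, hT2def]; linarith [ht]
  have := mono T3 t hT3nn hT3t
  have := hVnn t (hT3nn.trans hT3t)
  linarith [phase2b]

/-- Lyapunov-level content of Theorem 2 (Euler–Lagrange systems): each component
Lyapunov function `Vᵢ = |sᵢ|` decays at the constant rate `k₀ᵢ - d̄ᵢ` outside the
boundary layer and at the mixed-power rate inside it, hence all components vanish
after `T_out + T_in` with `T_out = maxᵢ max 0 (Vᵢ(0) - ε)/(k₀ᵢ - d̄ᵢ)` and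
`T_in = maxᵢ (1/(aᵢ(1-γ)) + 1/(bᵢ(α-1)))`. -/
theorem el_hybrid_gain_total_settling (n : ℕ) (hn : 1 ≤ n)
    (k₀ dbar a b : Fin n → ℝ) (ε γ α : ℝ)
    (hdbar : ∀ i, 0 ≤ dbar i) (hk₀ : ∀ i, k₀ i > dbar i) (hε : 0 < ε)
    (ha : ∀ i, 0 < a i) (hb : ∀ i, 0 < b i)
    (hγ0 : 0 < γ) (hγ1 : γ < 1) (hα : 1 < α)
    (V : Fin n → ℝ → ℝ)
    (hVnn : ∀ i, ∀ t ≥ (0:ℝ), 0 ≤ V i t)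
    (hcont : ∀ i, ContinuousOn (V i) (Set.Ici 0))
    (hdiff : ∀ i, ∀ t > (0:ℝ), V i t > 0 → DifferentiableAt ℝ (V i) t)
    (houter : ∀ i, ∀ t > (0:ℝ), V i t > ε → deriv (V i) t ≤ -(k₀ i - dbar i))
    (hinner : ∀ i, ∀ t > (0:ℝ), 0 < V i t → V i t ≤ ε →
      deriv (V i) t ≤ -a i * V i t ^ γ - b i * V i t ^ α) :
    ∀ t, t ≥ (⨆ i, max 0 (V i 0 - ε) / (k₀ i - dbar i)) +
        (⨆ i, (1 / (a i * (1 - γ)) + 1 / (b i * (α - 1)))) →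
      ∀ i, V i t = 0 := by
  have hne : Nonempty (Fin n) := ⟨⟨0, hn⟩⟩
  intro t ht i
  have h1 : max 0 (V i 0 - ε) / (k₀ i - dbar i) ≤
      ⨆ j, max 0 (V j 0 - ε) / (k₀ j - dbar j) :=
    le_ciSup (f := fun j => max 0 (V j 0 - ε) / (k₀ j - dbar j))
      (Set.Finite.bddAbove (Set.finite_range _)) i
  have h2 : (1 / (a i * (1 - γ)) + 1 / (b i * (α - 1))) ≤
      ⨆ j, (1 / (a j * (1 - γ)) + 1 / (b j * (α - 1))) :=
    le_ciSup (f := fun j => (1 / (a j * (1 - γ)) + 1 / (b j * (α - 1))))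
      (Set.Finite.bddAbove (Set.finite_range _)) i
  exact settle_single (V i) (k₀ i - dbar i) ε (a i) (b i) γ α
    (by linarith [hk₀ i]) hε (ha i) (hb i) hγ0 hγ1 hα
    (hVnn i) (hcont i) (hdiff i) (houter i) (hinner i) t (by linarith)
end
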